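/- Let ρ be a quantum state and σ a positive definite quantum state on a finite-dimensional complex Hilbert space. Then D̂(ρ‖σ) = tr[σ·(σ^{−1/2} ρ σ^{−1/2})·log(σ^{−1/2} ρ σ^{−1/2})], where the matrix X log X is defined by functional calculus applied to x ↦ x log x extended by 0 at x = 0. -/

import Mathlib

open Matrix MeasureTheory
open scoped Kronecker Classical ComplexOrder

noncomputable section

namespace QPaper

variable {n : Type*}

/-- A quantum state: positive semidefinite matrix with trace one. -/
def IsState [Fintype n] (ρ : Matrix n n ℂ) : Prop :=
  ρ.PosSemidef ∧ ρ.trace = 1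

/-- The trace norm of a matrix: `tr √(XᴴX)`. -/
noncomputable def traceNorm [Fintype n] [DecidableEq n] (X : Matrix n n ℂ) : ℝ :=
  (((Matrix.posSemidef_conjTranspose_mul_self X).1.eigenvectorUnitary : Matrix n n ℂ) *
    diagonal (((↑) : ℝ → ℂ) ∘ (√·) ∘ (Matrix.posSemidef_conjTranspose_mul_self X).1.eigenvalues) *
    (star (Matrix.posSemidef_conjTranspose_mul_self X).1.eigenvectorUnitary : Matrix n n ℂ)).trace.re

/-- Functional calculus for Hermitian matrices: apply `f` to the eigenvalues. -/
noncomputable def matFun [Fintype n] [DecidableEq n] (f : ℝ → ℂ) (A : Matrix n n ℂ) :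
    Matrix n n ℂ :=
  if hA : A.IsHermitian then
    (hA.eigenvectorUnitary : Matrix n n ℂ) *
      Matrix.diagonal (fun i => f (hA.eigenvalues i)) *
        (hA.eigenvectorUnitary : Matrix n n ℂ)ᴴ
  else 0

/-- Matrix logarithm on the support (0 ↦ 0). -/
noncomputable def mlog [Fintype n] [DecidableEq n] (A : Matrix n n ℂ) : Matrix n n ℂ :=
  matFun (fun x => (Real.log x : ℂ)) A

/-- Real matrix powers on the support (Moore-Penrose style, 0 ↦ 0 for r ≠ 0). -/
noncomputable def mpow [Fintype n] [DecidableEq n] (A : Matrix n n ℂ) (r : ℝ) : Matrix n n ℂ :=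
  matFun (fun x => ((x ^ r : ℝ) : ℂ)) A

/-- Complex matrix powers on the support (0 ↦ 0). -/
noncomputable def mcpow [Fintype n] [DecidableEq n] (A : Matrix n n ℂ) (z : ℂ) : Matrix n n ℂ :=
  matFun (fun x => if x = 0 then 0 else (x : ℂ) ^ z) A

/-- The matrix `A log A`, functional calculus for `x ↦ x log x` (0 ↦ 0). -/
noncomputable def mXLogX [Fintype n] [DecidableEq n] (A : Matrix n n ℂ) : Matrix n n ℂ :=
  matFun (fun x => ((x * Real.log x : ℝ) : ℂ)) A

/-- Umegaki relative entropy `D(ρ‖K) = tr[ρ (log ρ - log K)]`. -/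
noncomputable def relEnt [Fintype n] [DecidableEq n] (ρ K : Matrix n n ℂ) : ℝ :=
  ((ρ * (mlog ρ - mlog K)).trace).re

/-- Belavkin–Staszewski entropy `D̂(ρ‖K) = tr[ρ log(ρ^{1/2} K⁻¹ ρ^{1/2})]`. -/
noncomputable def bsEnt [Fintype n] [DecidableEq n] (ρ K : Matrix n n ℂ) : ℝ :=
  ((ρ * mlog (mpow ρ (1/2) * mpow K (-1) * mpow ρ (1/2))).trace).re

/-- von Neumann entropy. -/
noncomputable def vnEnt [Fintype n] [DecidableEq n] (ρ : Matrix n n ℂ) : ℝ :=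
  -(((ρ * mlog ρ).trace).re)

/-- Operator norm of a matrix. -/
noncomputable def opNorm [Fintype n] [DecidableEq n] (X : Matrix n n ℂ) : ℝ :=
  ‖Matrix.toEuclideanCLM (𝕜 := ℂ) X‖

/-- `ker K ⊆ ker ρ`. -/
def kerLE [Fintype n] (K ρ : Matrix n n ℂ) : Prop :=
  ∀ v : n → ℂ, K.mulVec v = 0 → ρ.mulVec v = 0

/-- partial trace over the first factor. -/
noncomputable def ptrA {a b : Type*} [Fintype a] (ρ : Matrix (a × b) (a × b) ℂ) :
    Matrix b b ℂ :=
  Matrix.of fun i j => ∑ x : a, ρ (x, i) (x, j)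

/-- partial trace over the second factor. -/
noncomputable def ptrB {a b : Type*} [Fintype b] (ρ : Matrix (a × b) (a × b) ℂ) :
    Matrix a a ℂ :=
  Matrix.of fun i j => ∑ x : b, ρ (i, x) (j, x)

/-- partial trace over the middle factor of a tripartite system. -/
noncomputable def ptrMid {a b c : Type*} [Fintype b]
    (ρ : Matrix (a × b × c) (a × b × c) ℂ) : Matrix (a × c) (a × c) ℂ :=
  Matrix.of fun p q => ∑ y : b, ρ (p.1, y, p.2) (q.1, y, q.2)

/-- Conditional entropy `H_ρ(A|B) = S(ρ_{AB}) - S(ρ_B)`. -/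
noncomputable def condEnt {a b : Type*} [Fintype a] [Fintype b] [DecidableEq a] [DecidableEq b]
    (ρ : Matrix (a × b) (a × b) ℂ) : ℝ :=
  vnEnt ρ - vnEnt (ptrA ρ)

/-- Mutual information `I_ρ(A:B) = S(ρ_A) + S(ρ_B) - S(ρ_{AB})`. -/
noncomputable def mutInfo {a b : Type*} [Fintype a] [Fintype b] [DecidableEq a] [DecidableEq b]
    (ρ : Matrix (a × b) (a × b) ℂ) : ℝ :=
  vnEnt (ptrB ρ) + vnEnt (ptrA ρ) - vnEnt ρ

/-- Conditional mutual information `I_ρ(A:B|C)`. -/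
noncomputable def condMutInfo {a b c : Type*} [Fintype a] [Fintype b] [Fintype c]
    [DecidableEq a] [DecidableEq b] [DecidableEq c]
    (ρ : Matrix (a × b × c) (a × b × c) ℂ) : ℝ :=
  vnEnt (ptrMid ρ) + vnEnt (ptrA ρ) - vnEnt (ptrA (ptrA ρ)) - vnEnt ρ

/-- BS-conditional entropy `Ĥ_ρ(A|B) = -D̂(ρ ‖ 𝟙_A ⊗ ρ_B)`. -/
noncomputable def bsCondEnt {a b : Type*} [Fintype a] [Fintype b] [DecidableEq a] [DecidableEq b]
    (ρ : Matrix (a × b) (a × b) ℂ) : ℝ :=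
  -(bsEnt ρ ((1 : Matrix a a ℂ) ⊗ₖ ptrA ρ))

/-- BS-mutual information `Î_ρ(A:B) = D̂(ρ ‖ ρ_A ⊗ ρ_B)`. -/
noncomputable def bsMutInfo {a b : Type*} [Fintype a] [Fintype b] [DecidableEq a] [DecidableEq b]
    (ρ : Matrix (a × b) (a × b) ℂ) : ℝ :=
  bsEnt ρ (ptrB ρ ⊗ₖ ptrA ρ)

/-- BS-conditional mutual information `Î_ρ(A:B|C) = Ĥ_ρ(A|C) - Ĥ_ρ(A|BC)`. -/
noncomputable def bsCondMutInfo {a b c : Type*} [Fintype a] [Fintype b] [Fintype c]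
    [DecidableEq a] [DecidableEq b] [DecidableEq c]
    (ρ : Matrix (a × b × c) (a × b × c) ℂ) : ℝ :=
  bsCondEnt (ptrMid ρ) - bsCondEnt (a := a) (b := b × c) ρ

/-- Binary entropy. -/
noncomputable def binEnt (p : ℝ) : ℝ :=
  -(p * Real.log p) - (1 - p) * Real.log (1 - p)

/-- The function `f_{c₁,c₂}`. -/
noncomputable def fcc (c₁ c₂ p : ℝ) : ℝ :=
  p * Real.log (p + (1 - p) * c₁) + (1 - p) * Real.log ((1 - p) + p * c₂)

/-- The probability density `β₀`. -/
noncomputable def beta0 (t : ℝ) : ℝ :=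
  (Real.pi / 2) * (Real.cosh (Real.pi * t) + 1)⁻¹


/-!
Put `Y = σ^{-1/2} ρ^{1/2}`. Then `ρ^{1/2} σ⁻¹ ρ^{1/2} = YᴴY`, `σ^{-1/2} ρ σ^{-1/2} = YYᴴ` and
`ρ = Yᴴ σ Y`, so `tr[ρ log(YᴴY)] = tr[σ · Y log(YᴴY) Yᴴ]`. The intertwining relation
`Y f(YᴴY) Yᴴ = g(YYᴴ)` with `g x = x f(x)` finishes the proof; it holds because on the (finite) joint
spectrum of `YᴴY` and `YYᴴ` the function `f` agrees with a polynomial `p`, and `Y p(YᴴY) = p(YYᴴ) Y`.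
-/

end QPaper

theorem Polynomial.semiconjBy_aeval {R A : Type*} [CommSemiring R] [Semiring A] [Algebra R A]
    {x a b : A} (h : SemiconjBy x a b) (p : Polynomial R) :
    SemiconjBy x (Polynomial.aeval a p) (Polynomial.aeval b p) := by
  induction p using Polynomial.induction_on' with
  | add p q hp hq => simpa only [map_add] using hp.add_right hq
  | monomial k c =>
    simp only [Polynomial.aeval_monomial]
    exact SemiconjBy.mul_right (Algebra.commute_algebraMap_right c x) (h.pow_right k)

theorem Polynomial.exists_eval_eq_on_finite {F : Type*} [Field F] {s : Set F} (hs : s.Finite)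
    (f : F → F) : ∃ p : Polynomial F, ∀ x ∈ s, p.eval x = f x := by
  have : Finite s := hs
  obtain ⟨p, hp⟩ := (Polynomial.exists_eval_eq_iff ((↑) : s → F) (f ∘ (↑))).mpr
    fun i j hij => by rw [Subtype.ext hij]
  exact ⟨p, fun x hx => hp ⟨x, hx⟩⟩

theorem Matrix.mul_cfc_conjTranspose_mul_self_mul_conjTranspose {n 𝕜 : Type*} [Fintype n]
    [DecidableEq n] [RCLike 𝕜] (f : ℝ → ℝ) (Y : Matrix n n 𝕜) :
    Y * cfc f (Yᴴ * Y) * Yᴴ = cfc (fun x => x * f x) (Y * Yᴴ) := by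
  obtain ⟨p, hp⟩ := Polynomial.exists_eval_eq_on_finite
    ((Yᴴ * Y).finite_real_spectrum.union (Y * Yᴴ).finite_real_spectrum) f
  have hYhY : IsSelfAdjoint (Yᴴ * Y) := (posSemidef_conjTranspose_mul_self Y).1
  have hYYh : IsSelfAdjoint (Y * Yᴴ) := (posSemidef_self_mul_conjTranspose Y).1
  calc Y * cfc f (Yᴴ * Y) * Yᴴ = Y * Polynomial.aeval (Yᴴ * Y) p * Yᴴ := by
        rw [← cfc_polynomial p _ hYhY, cfc_congr fun x hx => (hp x (.inl hx)).symm]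
    _ = Polynomial.aeval (Y * Yᴴ) p * (Y * Yᴴ) := by
        rw [(Polynomial.semiconjBy_aeval (Matrix.mul_assoc Y Yᴴ Y).symm p).eq, Matrix.mul_assoc]
    _ = cfc (fun x => p.eval x * x) (Y * Yᴴ) := by
        rw [cfc_mul _ _ _ ((Y * Yᴴ).finite_real_spectrum.continuousOn _), cfc_polynomial p _ hYYh,
          cfc_id' ℝ _ hYYh]
    _ = cfc (fun x => x * f x) (Y * Yᴴ) :=
        cfc_congr fun x hx => by rw [hp x (.inr hx), mul_comm]

namespace QPaper

section MatrixPower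

variable {n : Type*} [Fintype n] [DecidableEq n] {A : Matrix n n ℂ}

theorem matFun_ofReal_eq_cfc (hA : A.IsHermitian) (g : ℝ → ℝ) :
    matFun (fun x => (g x : ℂ)) A = cfc g A := by
  rw [matFun, dif_pos hA, hA.cfc_eq, IsHermitian.cfc, Unitary.conjStarAlgAut_apply]
  rfl

theorem mpow_eq_cfc (hA : A.IsHermitian) (r : ℝ) : mpow A r = cfc (fun x : ℝ => x ^ r) A :=
  matFun_ofReal_eq_cfc hA _

theorem mlog_eq_cfc (hA : A.IsHermitian) : mlog A = cfc Real.log A :=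
  matFun_ofReal_eq_cfc hA _

theorem mXLogX_eq_cfc (hA : A.IsHermitian) : mXLogX A = cfc (fun x => x * Real.log x) A :=
  matFun_ofReal_eq_cfc hA _

theorem isHermitian_mpow (hA : A.IsHermitian) (r : ℝ) : (mpow A r).IsHermitian := by
  rw [mpow_eq_cfc hA]
  exact cfc_predicate _ A

theorem mpow_zero (hA : A.IsHermitian) : mpow A 0 = 1 := by
  simp only [mpow_eq_cfc hA, Real.rpow_zero]
  exact cfc_const_one ℝ A

theorem mpow_one (hA : A.IsHermitian) : mpow A 1 = A := by
  simp only [mpow_eq_cfc hA, Real.rpow_one]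
  exact cfc_id' ℝ A hA

theorem mpow_mul_mpow_of_posSemidef (hA : A.PosSemidef) {r s : ℝ} (hrs : r + s ≠ 0) :
    mpow A r * mpow A s = mpow A (r + s) := by
  have hspec := A.finite_real_spectrum
  rw [mpow_eq_cfc hA.1, mpow_eq_cfc hA.1, mpow_eq_cfc hA.1,
    ← cfc_mul _ _ _ (hspec.continuousOn _) (hspec.continuousOn _)]
  refine cfc_congr fun x hx => (Real.rpow_add' ?_ hrs).symm
  obtain ⟨i, rfl⟩ := hA.1.spectrum_real_eq_range_eigenvalues ▸ hx
  exact hA.eigenvalues_nonneg i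

theorem mpow_mul_mpow_of_posDef (hA : A.PosDef) (r s : ℝ) :
    mpow A r * mpow A s = mpow A (r + s) := by
  have hspec := A.finite_real_spectrum
  rw [mpow_eq_cfc hA.1, mpow_eq_cfc hA.1, mpow_eq_cfc hA.1,
    ← cfc_mul _ _ _ (hspec.continuousOn _) (hspec.continuousOn _)]
  refine cfc_congr fun x hx => (Real.rpow_add ?_ r s).symm
  obtain ⟨i, rfl⟩ := hA.1.spectrum_real_eq_range_eigenvalues ▸ hx
  exact hA.eigenvalues_pos i

theorem mpow_half_mul_mpow_half (hA : A.PosSemidef) : mpow A (1/2) * mpow A (1/2) = A := by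
  rw [mpow_mul_mpow_of_posSemidef hA (by norm_num)]
  norm_num [mpow_one hA.1]

theorem mpow_neg_half_mul_mpow_neg_half (hA : A.PosDef) :
    mpow A (-(1/2)) * mpow A (-(1/2)) = mpow A (-1) := by
  rw [mpow_mul_mpow_of_posDef hA]
  norm_num

theorem mpow_neg_half_mul_mul_mpow_neg_half (hA : A.PosDef) :
    mpow A (-(1/2)) * A * mpow A (-(1/2)) = 1 := calc
  _ = mpow A (-(1/2)) * mpow A 1 * mpow A (-(1/2)) := by rw [mpow_one hA.1]
  _ = 1 := by
    rw [mpow_mul_mpow_of_posDef hA, mpow_mul_mpow_of_posDef hA]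
    norm_num [mpow_zero hA.1]

end MatrixPower

theorem bsEnt_alt_rep_general {d : ℕ}
    (ρ σ : Matrix (Fin d) (Fin d) ℂ)
    (hρ : IsState ρ) (hσpd : σ.PosDef) :
    bsEnt ρ σ =
      ((σ * mXLogX (mpow σ (-(1/2)) * ρ * mpow σ (-(1/2)))).trace).re := by
  set R := mpow ρ (1/2)
  set T := mpow σ (-(1/2))
  set Y := T * R
  have hRR : R * R = ρ := mpow_half_mul_mpow_half hρ.1
  have hTσT : T * σ * T = 1 := mpow_neg_half_mul_mul_mpow_neg_half hσpd
  have hYh : Yᴴ = R * T := by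
    rw [conjTranspose_mul, (isHermitian_mpow hσpd.1 _).eq, (isHermitian_mpow hρ.1.1 _).eq]
  have hρ_eq : ρ = Yᴴ * σ * Y := calc
    ρ = R * (T * σ * T) * R := by rw [hTσT, Matrix.mul_one, hRR]
    _ = Yᴴ * σ * Y := by
      rw [hYh]
      simp only [Y, Matrix.mul_assoc]
  have hYhY : R * mpow σ (-1) * R = Yᴴ * Y := by
    rw [hYh, ← mpow_neg_half_mul_mpow_neg_half hσpd]
    simp only [Y, T, Matrix.mul_assoc]
  have hYYh : T * ρ * T = Y * Yᴴ := by
    rw [hYh, ← hRR]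
    simp only [Y, Matrix.mul_assoc]
  rw [bsEnt, hYhY, hYYh, mXLogX_eq_cfc (posSemidef_self_mul_conjTranspose Y).1,
    ← mul_cfc_conjTranspose_mul_self_mul_conjTranspose,
    ← mlog_eq_cfc (posSemidef_conjTranspose_mul_self Y).1, hρ_eq]
  simp only [Matrix.mul_assoc]
  rw [trace_mul_comm Yᴴ]
  simp only [Matrix.mul_assoc]

/-- **Alternative representation of the BS-entropy**. -/
theorem bsEnt_alt_rep {d : ℕ}
    (ρ σ : Matrix (Fin d) (Fin d) ℂ)
    (hρ : IsState ρ) (hσ : IsState σ) (hσpd : σ.PosDef) :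
    bsEnt ρ σ =
      ((σ * mXLogX (mpow σ (-(1/2)) * ρ * mpow σ (-(1/2)))).trace).re :=
  bsEnt_alt_rep_general ρ σ hρ hσpd

end QPaper
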